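/- Let n ∈ ℕ, S = {0, 1, …, 2^n − 1}, and p ∈ (0,1]. Let P be the probability distribution on S×S×S given by P(x,y,z) = p·2^{−n}·[x = y = z] + (1−p)·2^{−2n}·[x = (y+z) mod 2^n], and let R be the classical channel from S to S×S given by R(y',z'|y) = p·[y' = y]·[z' = y] + (1−p)·2^{−n}·[(y'+z') mod 2^n = y]. Then (i) R maps the Y-marginal of P to the YZ-marginal of P, i.e., R(P_Y) = P_YZ, and (ii) D( P ‖ (id⊗R)(P_XY) ) ≤ log(1/p). -/

import Mathlib

noncomputable section

namespace CIT

/-- A probability distribution on a finite set. -/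
def IsDist {X : Type*} [Fintype X] (p : X → ℝ) : Prop :=
  (∀ x, 0 ≤ p x) ∧ ∑ x, p x = 1

/-- Support inclusion `supp p ⊆ supp q`. -/
def suppLe {X : Type*} (p q : X → ℝ) : Prop := ∀ x, p x ≠ 0 → q x ≠ 0

open Classical in
/-- Relative entropy (base 2), with `0·log 0 = 0`, `+∞` if the support
condition fails. -/
def relEnt {X : Type*} [Fintype X] (p q : X → ℝ) : EReal :=
  if suppLe p q then ((∑ x, p x * Real.logb 2 (p x / q x) : ℝ) : EReal) else ⊤

open Classical in
/-- Max-relative entropy `D_max(p‖q) = log max_{x ∈ supp p} p(x)/q(x)`,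
`+∞` if the support condition fails. -/
def dMax {X : Type*} [Fintype X] (p q : X → ℝ) : EReal :=
  if suppLe p q then
    ((Real.logb 2 (sSup {r : ℝ | ∃ x, p x ≠ 0 ∧ r = p x / q x}) : ℝ) : EReal)
  else ⊤

open Classical in
/-- Rényi relative entropy of order `α` (base 2), with `D_1 := D` and `+∞`
when `α > 1` and the support condition fails. -/
def renyi {X : Type*} [Fintype X] (α : ℝ) (p q : X → ℝ) : EReal :=
  if α = 1 then relEnt p q
  else if 1 < α ∧ ¬ suppLe p q then ⊤
  else (((α - 1)⁻¹ * Real.logb 2 (∑ x, p x ^ α * q x ^ (1 - α)) : ℝ) : EReal)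

/-- The `XY`-marginal of a tripartite distribution. -/
def margXY {X Y Z : Type*} [Fintype Z] (P : X × Y × Z → ℝ) : X × Y → ℝ :=
  fun t => ∑ z, P (t.1, t.2, z)

/-- The `YZ`-marginal of a tripartite distribution. -/
def margYZ {X Y Z : Type*} [Fintype X] (P : X × Y × Z → ℝ) : Y × Z → ℝ :=
  fun t => ∑ x, P (x, t.1, t.2)

/-- The `Y`-marginal of a tripartite distribution. -/
def margY {X Y Z : Type*} [Fintype X] [Fintype Z] (P : X × Y × Z → ℝ) : Y → ℝ :=
  fun y => ∑ x, ∑ z, P (x, y, z)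

/-- Conditional mutual information
`I(X:Z|Y)_P = Σ P(x,y,z) log( P(x,y,z)·P_Y(y) / (P_XY(x,y)·P_YZ(y,z)) )`. -/
def cmi {X Y Z : Type*} [Fintype X] [Fintype Y] [Fintype Z] (P : X × Y × Z → ℝ) : ℝ :=
  ∑ s : X × Y × Z,
    P s * Real.logb 2 (P s * margY P s.2.1 / (margXY P (s.1, s.2.1) * margYZ P (s.2.1, s.2.2)))

/-- A classical channel from `Y` to `W`: a family of conditional distributions. -/
def IsChannel {Y W : Type*} [Fintype W] (R : Y → W → ℝ) : Prop :=
  ∀ y, (∀ w, 0 ≤ R y w) ∧ ∑ w, R y w = 1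

/-- Action `(id ⊗ R)` of a channel `R : Y → W` on a joint distribution on `X × Y`. -/
def applyChan {X Y W : Type*} [Fintype Y] (R : Y → W → ℝ) (P : X × Y → ℝ) : X × W → ℝ :=
  fun t => ∑ y, P (t.1, y) * R y t.2

/-- Action of a channel `R : Y → W` on a distribution on `Y`. -/
def chanOnDist {Y W : Type*} [Fintype Y] (R : Y → W → ℝ) (q : Y → ℝ) : W → ℝ :=
  fun w => ∑ y, q y * R y w

/-- Marginal channel `R_{Y→Y}(y'|y) = Σ_{z'} R(y',z'|y)`. -/
def margChan {Y Y' Z' : Type*} [Fintype Z'] (R : Y → Y' × Z' → ℝ) : Y → Y' → ℝ :=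
  fun y y' => ∑ z', R y (y', z')

end CIT

/-! Over any finite abelian group `G` (here `ℤ/2ⁿ`) every marginal of `P` is explicit: `P_Y` is
uniform and `P_XY = P_YZ = p·(uniform on the diagonal) + (1-p)·(uniform)`. Hence
`(id⊗R)(P_XY)(x,y',z') = p·[y'=z']·P_XY(x,y') + (1-p)/|G|·P_XY(x,y'+z')`, which dominates
`p·P(x,y',z')` term by term; a pointwise bound `p·P ≤ Q` gives `D(P‖Q) ≤ log(1/p)`. -/

namespace CIT

open Finset

theorem relEnt_le_logb_one_div_of_mul_le {X : Type*} [Fintype X] {p q : X → ℝ} {c : ℝ} (hc : 0 < c)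
    (hp : IsDist p) (hpq : ∀ x, c * p x ≤ q x) :
    relEnt p q ≤ ((Real.logb 2 (1 / c) : ℝ) : EReal) := by
  have hq : ∀ x, p x ≠ 0 → 0 < q x := fun x hx =>
    (mul_pos hc ((hp.1 x).lt_of_ne' hx)).trans_le (hpq x)
  rw [relEnt, if_pos (show suppLe p q from fun x hx => (hq x hx).ne'), EReal.coe_le_coe_iff]
  calc ∑ x, p x * Real.logb 2 (p x / q x)
      ≤ ∑ x, p x * Real.logb 2 (1 / c) := by
        refine sum_le_sum fun x _ => ?_
        rcases (hp.1 x).eq_or_lt' with hx | hx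
        · simp [hx]
        have hqx := hq x hx.ne'
        refine mul_le_mul_of_nonneg_left (Real.logb_le_logb_of_le one_lt_two (by positivity) ?_) hx.le
        rw [div_le_div_iff₀ hqx hc]
        linarith [hpq x]
    _ = Real.logb 2 (1 / c) := by rw [← sum_mul, hp.2, one_mul]

theorem sum_margY {X Y Z : Type*} [Fintype X] [Fintype Y] [Fintype Z] (P : X × Y × Z → ℝ) :
    ∑ y, margY P y = ∑ s, P s := by
  simp only [margY, Fintype.sum_prod_type]
  exact sum_comm

section

variable {G : Type*} [AddCommGroup G] [Fintype G] [DecidableEq G]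

def mixedDist (p : ℝ) : G × G × G → ℝ := fun s =>
  p * (Fintype.card G : ℝ)⁻¹ * (if s.1 = s.2.1 ∧ s.2.1 = s.2.2 then 1 else 0) +
    (1 - p) * ((Fintype.card G : ℝ)⁻¹) ^ 2 * (if s.1 = s.2.1 + s.2.2 then 1 else 0)

def recoveryChannel (p : ℝ) : G → G × G → ℝ := fun y t =>
  p * (if t.1 = y then 1 else 0) * (if t.2 = y then 1 else 0) +
    (1 - p) * (Fintype.card G : ℝ)⁻¹ * (if t.1 + t.2 = y then 1 else 0)

theorem margY_mixedDist (p : ℝ) (y : G) : margY (mixedDist p) y = (Fintype.card G : ℝ)⁻¹ := by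
  simp only [margY, mixedDist, ite_and, mul_ite, mul_one, mul_zero, ← sub_eq_iff_eq_add',
    sum_add_distrib, sum_ite_irrel, sum_ite_eq, sum_ite_eq', sum_const_zero, mem_univ, if_true,
    sum_const, card_univ, nsmul_eq_mul]
  field_simp
  ring

theorem margXY_mixedDist (p : ℝ) (x y : G) : margXY (mixedDist p) (x, y) =
    p * (Fintype.card G : ℝ)⁻¹ * (if x = y then 1 else 0) + (1 - p) * ((Fintype.card G : ℝ)⁻¹) ^ 2 := by
  simp [margXY, mixedDist, sum_add_distrib, ite_and, ← sub_eq_iff_eq_add']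

theorem margYZ_mixedDist (p : ℝ) (y z : G) : margYZ (mixedDist p) (y, z) =
    p * (Fintype.card G : ℝ)⁻¹ * (if y = z then 1 else 0) + (1 - p) * ((Fintype.card G : ℝ)⁻¹) ^ 2 := by
  simp [margYZ, mixedDist, sum_add_distrib, ite_and]

theorem applyChan_recoveryChannel {X : Type*} (p : ℝ) (q : X × G → ℝ) (x : X) (a b : G) :
    applyChan (recoveryChannel p) q (x, a, b) =
      p * (if a = b then q (x, a) else 0) + (1 - p) * (Fintype.card G : ℝ)⁻¹ * q (x, a + b) := by
  simp only [applyChan, recoveryChannel, mul_ite, mul_one, mul_zero, mul_add, sum_add_distrib,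
    sum_ite_eq, mem_univ, if_true]
  split_ifs with h
  · subst h; ring
  · ring

theorem chanOnDist_recoveryChannel_margY (p : ℝ) :
    chanOnDist (recoveryChannel p) (margY (mixedDist p)) = margYZ (mixedDist (G := G) p) := by
  funext ⟨a, b⟩
  simp only [chanOnDist, margY_mixedDist, margYZ_mixedDist, recoveryChannel, mul_ite, mul_one,
    mul_zero, mul_add, sum_add_distrib, sum_ite_eq, mem_univ, if_true]
  split_ifs <;> ring

theorem mixedDist_nonneg {p : ℝ} (hp0 : 0 ≤ p) (hp1 : p ≤ 1) (s : G × G × G) : 0 ≤ mixedDist p s := by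
  unfold mixedDist
  have := sub_nonneg.2 hp1
  positivity

theorem mul_mixedDist_le_applyChan {p : ℝ} (hp0 : 0 ≤ p) (hp1 : p ≤ 1) (s : G × G × G) :
    p * mixedDist p s ≤ applyChan (recoveryChannel p) (margXY (mixedDist p)) s := by
  obtain ⟨x, a, b⟩ := s
  set u := (Fintype.card G : ℝ)⁻¹ with hu_def
  rw [applyChan_recoveryChannel, margXY_mixedDist, margXY_mixedDist]
  calc p * mixedDist p (x, a, b)
      = p * (p * u * (if x = a ∧ a = b then 1 else 0)) +
          (1 - p) * u * (p * u * (if x = a + b then 1 else 0)) := by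
        simp only [mixedDist, hu_def]; ring
    _ ≤ p * (if a = b then p * u * (if x = a then 1 else 0) + (1 - p) * u ^ 2 else 0) +
          (1 - p) * u * (p * u * (if x = a + b then 1 else 0) + (1 - p) * u ^ 2) := by
        gcongr
        · rcases eq_or_ne a b with rfl | h
          · simp only [and_true, if_true]
            exact le_add_of_nonneg_right (by positivity)
          · simp [h]
        · exact le_add_of_nonneg_right (by positivity)

theorem isDist_mixedDist {p : ℝ} (hp0 : 0 ≤ p) (hp1 : p ≤ 1) : IsDist (mixedDist (G := G) p) := by
  refine ⟨mixedDist_nonneg hp0 hp1, ?_⟩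
  rw [← sum_margY]
  simp only [margY_mixedDist, sum_const, card_univ, nsmul_eq_mul]
  exact mul_inv_cancel₀ (Nat.cast_ne_zero.2 Fintype.card_ne_zero)

end

end CIT

open CIT in
/-- for the distribution `P` of Statement 17 and the recovery
channel `R(y',z'|y) = p·[y'=y]·[z'=y] + (1−p)·2^{−n}·[(y'+z') mod 2^n = y]`,
(i) `R(P_Y) = P_YZ` and (ii) `D(P ‖ (id⊗R)(P_XY)) ≤ log(1/p)`. -/
theorem recovery_channel_good (n : ℕ) (p : ℝ) (hp0 : 0 < p) (hp1 : p ≤ 1)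
    (P : Fin (2 ^ n) × Fin (2 ^ n) × Fin (2 ^ n) → ℝ)
    (hP : P = fun s =>
      p * ((2 ^ n : ℕ) : ℝ)⁻¹ * (if s.1 = s.2.1 ∧ s.2.1 = s.2.2 then 1 else 0) +
        (1 - p) * (((2 ^ n : ℕ) : ℝ)⁻¹) ^ 2 *
          (if s.1.val = (s.2.1.val + s.2.2.val) % 2 ^ n then 1 else 0))
    (R : Fin (2 ^ n) → Fin (2 ^ n) × Fin (2 ^ n) → ℝ)
    (hR : R = fun y t =>
      p * (if t.1 = y then 1 else 0) * (if t.2 = y then 1 else 0) +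
        (1 - p) * ((2 ^ n : ℕ) : ℝ)⁻¹ * (if (t.1.val + t.2.val) % 2 ^ n = y.val then 1 else 0)) :
    chanOnDist R (margY P) = margYZ P ∧
      relEnt P (applyChan R (margXY P)) ≤ ((Real.logb 2 (1 / p) : ℝ) : EReal) := by
  have hP' : P = mixedDist p := by
    subst hP
    funext s
    simp [mixedDist, Fin.ext_iff, Fin.val_add]
  have hR' : R = recoveryChannel p := by
    subst hR
    funext y t
    simp [recoveryChannel, Fin.ext_iff, Fin.val_add]
  subst hP' hR'
  exact ⟨chanOnDist_recoveryChannel_margY p,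
    relEnt_le_logb_one_div_of_mul_le hp0 (isDist_mixedDist hp0.le hp1) (mul_mixedDist_le_applyChan hp0.le hp1)⟩
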